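/- Two-way termination similarity is sound for contextual equivalence in Ref²: if p ≡_r q then p ≡ctx_r q, and if c ≡_w d then c ≡ctx_w d, where ≡ = ≼ ∩ ≽ is the symmetrization of termination similarity. -/

import Mathlib

/-! # Statement 19: two-way termination similarity is sound for contextual equivalence in Ref² -/
namespace RefLang

/-- Expressions of Ref² over the set `Loc` of locations. -/
inductive RExp (Loc : Type) : Type
  | loc : Loc → RExp Loc
  | int : ℤ → RExp Loc
  | deref : RExp Loc → RExp Loc
  | add : RExp Loc → RExp Loc → RExp Loc
  | sub : RExp Loc → RExp Loc → RExp Loc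

mutual
/-- Readers of Ref². -/
inductive Rd (Loc : Type) : Type
  | skip : Rd Loc
  | whileE : RExp Loc → Rd Loc → Rd Loc
  /-- `e := p` -/
  | assign : RExp Loc → Rd Loc → Rd Loc
  /-- `if e then p else q` -/
  | ite : RExp Loc → Rd Loc → Rd Loc → Rd Loc
  | seq : Rd Loc → Rd Loc → Rd Loc
  /-- `&p` -/
  | ref : Rd Loc → Rd Loc
  | expr : RExp Loc → Rd Loc
  | proc : Rd Loc → Rd Loc
/-- Writers of Ref².  Here values are elements of `V(Rd) = Loc ⊕ ℤ ⊕ Rd Loc` and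
stores are partial maps `Loc → Option (V(Rd))`. -/
inductive Wr (Loc : Type) : Type
  /-- `e := c` -/
  | assignW : RExp Loc → Wr Loc → Wr Loc
  /-- `c ; q` -/
  | seqW : Wr Loc → Rd Loc → Wr Loc
  /-- `&c` -/
  | refW : Wr Loc → Wr Loc
  /-- `s.c` -/
  | outW : (Loc → Option (Loc ⊕ ℤ ⊕ Rd Loc)) → Wr Loc → Wr Loc
  /-- `[p]_s` -/
  | runW : Rd Loc → (Loc → Option (Loc ⊕ ℤ ⊕ Rd Loc)) → Wr Loc
  /-- `ret_{v,s}` -/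
  | retV : (Loc ⊕ ℤ ⊕ Rd Loc) → (Loc → Option (Loc ⊕ ℤ ⊕ Rd Loc)) → Wr Loc
  /-- `ret_s` -/
  | retS : (Loc → Option (Loc ⊕ ℤ ⊕ Rd Loc)) → Wr Loc
end

/-- Values `V(Rd)`. -/
abbrev Val (Loc : Type) : Type := Loc ⊕ ℤ ⊕ Rd Loc

/-- Stores `𝒮(Rd)`: partial maps from locations to values. -/
abbrev St (Loc : Type) : Type := Loc → Option (Val Loc)

variable {Loc : Type}

open Classical in
/-- Store update `s[l ↦ v]`. -/
noncomputable def updS (s : St Loc) (l : Loc) (v : Val Loc) : St Loc :=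
  fun l' => if l' = l then some v else s l'

/-- Partial expression evaluation `eev : 𝒮(Rd) × Ex ⇀ V(Rd)`. -/
def eev (s : St Loc) : RExp Loc → Option (Val Loc)
  | .loc l => some (.inl l)
  | .int n => some (.inr (.inl n))
  | .deref e =>
      match eev s e with
      | some (.inl l) => s l
      | _ => none
  | .add e₁ e₂ =>
      match eev s e₁, eev s e₂ with
      | some (.inr (.inl n₁)), some (.inr (.inl n₂)) => some (.inr (.inl (n₁ + n₂)))
      | _, _ => none
  | .sub e₁ e₂ =>
      match eev s e₁, eev s e₂ with
      | some (.inr (.inl n₁)), some (.inr (.inl n₂)) => some (.inr (.inl (n₁ - n₂)))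
      | _, _ => none

/-- The reader semantics of Ref²: `rstep p s = some c` means `p,s → c` (there is at
most one transition from each `p,s`; `none` means `p` is stuck at `s`). -/
def rstep : Rd Loc → St Loc → Option (Wr Loc)
  | .skip, s => some (.retS s)
  | .whileE e p, s =>
      match eev s e with
      | some (.inr (.inl n)) =>
          if n = 0 then some (.retS s)
          else some (.outW s (.runW (.seq p (.whileE e p)) s))
      | _ => none
  | .assign e p, s => some (.assignW e (.runW p s))
  | .ite e p q, s =>
      match eev s e with
      | some (.inr (.inl n)) =>
          if n = 0 then some (.outW s (.runW q s)) else some (.outW s (.runW p s))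
      | _ => none
  | .seq p q, s => some (.seqW (.runW p s) q)
  | .ref p, s => some (.refW (.runW p s))
  | .expr e, s =>
      match eev s e with
      | some (.inr (.inr p)) => some (.outW s (.runW p s))
      | some v => some (.retV v s)
      | none => none
  | .proc p, s => some (.retV (.inr (.inr p)) s)

/-- Labels of writer transitions: `tau d` is `c → d`, `out s d` is `c →ˢ d`,
`dn s` is `c ↓ s`, and `dnV v s` is `c ↓ v,s`. -/
inductive WLab (Loc : Type) : Type
  | tau : Wr Loc → WLab Loc
  | out : St Loc → Wr Loc → WLab Loc
  | dn : St Loc → WLab Loc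
  | dnV : Val Loc → St Loc → WLab Loc

/-- The writer semantics of Ref², as an inductively defined (nondeterministic)
labelled transition relation. -/
inductive WTr : Wr Loc → WLab Loc → Prop
  | runW {p : Rd Loc} {s c} : rstep p s = some c → WTr (.runW p s) (.tau c)
  | retV {v : Val Loc} {s} : WTr (.retV v s) (.dnV v s)
  | retS {s : St Loc} : WTr (.retS s) (.dn s)
  | outW {s : St Loc} {c} : WTr (.outW s c) (.out s c)
  | refTau {c d : Wr Loc} : WTr c (.tau d) → WTr (.refW c) (.tau (.refW d))
  | refOut {c d : Wr Loc} {s} : WTr c (.out s d) → WTr (.refW c) (.out s (.refW d))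
  | refDn {c : Wr Loc} {v s l} :
      WTr c (.dnV v s) → s l = none → WTr (.refW c) (.dnV (.inl l) (updS s l v))
  | seqTau {c d : Wr Loc} {q} : WTr c (.tau d) → WTr (.seqW c q) (.tau (.seqW d q))
  | seqOut {c d : Wr Loc} {s q} :
      WTr c (.out s d) → WTr (.seqW c q) (.out s (.seqW d q))
  | seqDnV {c : Wr Loc} {v s q} :
      WTr c (.dnV v s) → WTr (.seqW c q) (.out s (.runW q s))
  | seqDn {c : Wr Loc} {s q} : WTr c (.dn s) → WTr (.seqW c q) (.tau (.runW q s))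
  | asgTau {e} {c d : Wr Loc} :
      WTr c (.tau d) → WTr (.assignW e c) (.tau (.assignW e d))
  | asgOut {e} {c d : Wr Loc} {s} :
      WTr c (.out s d) → WTr (.assignW e c) (.out s (.assignW e d))
  | asgDn {e} {c : Wr Loc} {v s l} :
      eev s e = some (.inl l) → WTr c (.dnV v s) →
      WTr (.assignW e c) (.dn (updS s l v))

/-- A single (silent or output) writer step. -/
def Step1 (c d : Wr Loc) : Prop := WTr c (.tau d) ∨ ∃ s, WTr c (.out s d)

/-- The weak transition `c ⇒ d`: a finite chain of `→` and `→ˢ` steps. -/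
def Wk : Wr Loc → Wr Loc → Prop := Relation.ReflTransGen Step1

/-- `c ⇓ s`: `c ⇒ c' ↓ s` for some `c'`. -/
def BigS (c : Wr Loc) (s : St Loc) : Prop := ∃ c', Wk c c' ∧ WTr c' (.dn s)

/-- `c ⇓ v,s`: `c ⇒ c' ↓ v,s` for some `c'`. -/
def BigV (c : Wr Loc) (v : Val Loc) (s : St Loc) : Prop :=
  ∃ c', Wk c c' ∧ WTr c' (.dnV v s)

/-- `c ⇓`: the writer `c` terminates. -/
def ConvW (c : Wr Loc) : Prop := (∃ v s, BigV c v s) ∨ (∃ s, BigS c s)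

/-- `p,s ⇓`: the reader `p` terminates on the input store `s`. -/
def ConvR (p : Rd Loc) (s : St Loc) : Prop := ∃ c, rstep p s = some c ∧ ConvW c

/-- The relational lifting `V(R_r) = Δ_Loc ∪ Δ_ℤ ∪ R_r` on values. -/
def VRel (Rr : Rd Loc → Rd Loc → Prop) : Val Loc → Val Loc → Prop
  | .inl l, .inl l' => l = l'
  | .inr (.inl n), .inr (.inl n') => n = n'
  | .inr (.inr p), .inr (.inr p') => Rr p p'
  | _, _ => False

/-- The relational lifting `𝒮(R_r)` on stores: equal domains and `V(R_r)`-related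
values at every defined location. -/
def SRel (Rr : Rd Loc → Rd Loc → Prop) (s₁ s₂ : St Loc) : Prop :=
  ∀ l, (s₁ l = none ∧ s₂ l = none) ∨
    ∃ v₁ v₂, s₁ l = some v₁ ∧ s₂ l = some v₂ ∧ VRel Rr v₁ v₂

end RefLang
namespace RefLang

variable {Loc : Type}

/-- A (higher-order) termination simulation on Ref². -/
def IsTermSim (Rr : Rd Loc → Rd Loc → Prop) (Rw : Wr Loc → Wr Loc → Prop) : Prop :=
  (∀ p q s c, Rr p q → rstep p s = some c → ∃ d, rstep q s = some d ∧ Rw c d) ∧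
  (∀ c d c', Rw c d → (WTr c (.tau c') ∨ ∃ s, WTr c (.out s c')) →
      ∃ d', Wk d d' ∧ Rw c' d') ∧
  (∀ c d s, Rw c d → WTr c (.dn s) → ∃ s', BigS d s' ∧ SRel Rr s s') ∧
  (∀ c d v s, Rw c d → WTr c (.dnV v s) →
      ∃ v' s', BigV d v' s' ∧ VRel Rr v v' ∧ SRel Rr s s')

/-- Termination similarity `≼_r` on readers: the greatest termination simulation
(the union of all termination simulations). -/
def SimR (p q : Rd Loc) : Prop := ∃ Rr Rw, IsTermSim Rr Rw ∧ Rr p q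

/-- Termination similarity `≼_w` on writers. -/
def SimW (c d : Wr Loc) : Prop := ∃ Rr Rw, IsTermSim Rr Rw ∧ Rw c d

/-- The symmetrization `≡_r = ≼_r ∩ ≽_r` of termination similarity on readers. -/
def EqvR (p q : Rd Loc) : Prop := SimR p q ∧ SimR q p

/-- The symmetrization `≡_w = ≼_w ∩ ≽_w` of termination similarity on writers. -/
def EqvW (c d : Wr Loc) : Prop := SimW c d ∧ SimW d c

end RefLang
namespace RefLang

/-- Sorts of Ref² terms: readers (`r`) and writers (`w`). -/
inductive Sort2 : Type
  | r
  | w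

/-- Terms of a given sort. -/
def Tm2 (Loc : Type) : Sort2 → Type
  | .r => Rd Loc
  | .w => Wr Loc

mutual
/-- Reader-sorted one-hole contexts of Ref² with a hole of sort `h`. -/
inductive CtxR (Loc : Type) : Sort2 → Type
  | hole : CtxR Loc .r
  | whileE {h} : RExp Loc → CtxR Loc h → CtxR Loc h
  | assign {h} : RExp Loc → CtxR Loc h → CtxR Loc h
  | iteL {h} : RExp Loc → CtxR Loc h → Rd Loc → CtxR Loc h
  | iteR {h} : RExp Loc → Rd Loc → CtxR Loc h → CtxR Loc h
  | seqL {h} : CtxR Loc h → Rd Loc → CtxR Loc h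
  | seqR {h} : Rd Loc → CtxR Loc h → CtxR Loc h
  | ref {h} : CtxR Loc h → CtxR Loc h
  | proc {h} : CtxR Loc h → CtxR Loc h
/-- Writer-sorted one-hole contexts of Ref² with a hole of sort `h`. -/
inductive CtxW (Loc : Type) : Sort2 → Type
  | hole : CtxW Loc .w
  | assignW {h} : RExp Loc → CtxW Loc h → CtxW Loc h
  | seqWL {h} : CtxW Loc h → Rd Loc → CtxW Loc h
  | seqWR {h} : Wr Loc → CtxR Loc h → CtxW Loc h
  | refW {h} : CtxW Loc h → CtxW Loc h
  /-- `s.C` with the hole in the writer argument. -/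
  | outWC {h} : St Loc → CtxW Loc h → CtxW Loc h
  /-- `S.c` with the hole in the store. -/
  | outWS {h} : CtxS Loc h → Wr Loc → CtxW Loc h
  /-- `[C]_s` with the hole in the reader. -/
  | runWP {h} : CtxR Loc h → St Loc → CtxW Loc h
  /-- `[p]_S` with the hole in the store. -/
  | runWS {h} : Rd Loc → CtxS Loc h → CtxW Loc h
  /-- `ret_{C,s}` with the hole inside the (reader) value. -/
  | retVV {h} : CtxR Loc h → St Loc → CtxW Loc h
  /-- `ret_{v,S}` with the hole in the store. -/
  | retVS {h} : Val Loc → CtxS Loc h → CtxW Loc h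
  /-- `ret_S` with the hole in the store. -/
  | retSS {h} : CtxS Loc h → CtxW Loc h
/-- One-hole store contexts: a store `s` whose value at the location `l` is a
reader containing the hole. -/
inductive CtxS (Loc : Type) : Sort2 → Type
  | mk {h} : St Loc → Loc → CtxR Loc h → CtxS Loc h
end

variable {Loc : Type}

mutual
/-- Plugging a term into a reader-sorted one-hole context. -/
noncomputable def plugR : {h : Sort2} → CtxR Loc h → Tm2 Loc h → Rd Loc
  | _, .hole, t => t
  | _, .whileE e C, t => .whileE e (plugR C t)
  | _, .assign e C, t => .assign e (plugR C t)
  | _, .iteL e C q, t => .ite e (plugR C t) q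
  | _, .iteR e p C, t => .ite e p (plugR C t)
  | _, .seqL C q, t => .seq (plugR C t) q
  | _, .seqR p C, t => .seq p (plugR C t)
  | _, .ref C, t => .ref (plugR C t)
  | _, .proc C, t => .proc (plugR C t)
/-- Plugging a term into a writer-sorted one-hole context. -/
noncomputable def plugW : {h : Sort2} → CtxW Loc h → Tm2 Loc h → Wr Loc
  | _, .hole, t => t
  | _, .assignW e C, t => .assignW e (plugW C t)
  | _, .seqWL C q, t => .seqW (plugW C t) q
  | _, .seqWR c C, t => .seqW c (plugR C t)
  | _, .refW C, t => .refW (plugW C t)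
  | _, .outWC s C, t => .outW s (plugW C t)
  | _, .outWS Cs c, t => .outW (plugS Cs t) c
  | _, .runWP C s, t => .runW (plugR C t) s
  | _, .runWS p Cs, t => .runW p (plugS Cs t)
  | _, .retVV C s, t => .retV (.inr (.inr (plugR C t))) s
  | _, .retVS v Cs, t => .retV v (plugS Cs t)
  | _, .retSS Cs, t => .retS (plugS Cs t)
/-- Plugging a term into a one-hole store context. -/
noncomputable def plugS : {h : Sort2} → CtxS Loc h → Tm2 Loc h → St Loc
  | _, .mk s l C, t => updS s l (.inr (.inr (plugR C t)))
end

/-- Contextual equivalence `≡ctx_r` on readers: `C[p]` and `C[q]` have the same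
termination behaviour for every context with a reader-sorted hole. -/
def CtxEqR (p q : Rd Loc) : Prop :=
  (∀ (C : CtxR Loc .r) (s : St Loc), ConvR (plugR C p) s ↔ ConvR (plugR C q) s) ∧
  (∀ C : CtxW Loc .r, ConvW (plugW C p) ↔ ConvW (plugW C q))

/-- Contextual equivalence `≡ctx_w` on writers: `C[c]` and `C[d]` have the same
termination behaviour for every context with a writer-sorted hole. -/
def CtxEqW (c d : Wr Loc) : Prop :=
  (∀ (C : CtxR Loc .w) (s : St Loc), ConvR (plugR C c) s ↔ ConvR (plugR C d) s) ∧
  (∀ C : CtxW Loc .w, ConvW (plugW C c) ↔ ConvW (plugW C d))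

end RefLang

/-!
Howe's method, which for Ref² needs no substitution lemma since there are no binders. Let
`≼°` be the least relation, on readers and on writers, that is compatible with every term
constructor and absorbs `≼` on the right. It is reflexive and contains `≼`, so it relates
`C[t]` to `C[t']` whenever `t ≼ t'`. It is also a termination simulation: a reader step at
`≼°`-related stores is matched because `eev` maps related stores to related values, and a
writer transition is matched by induction on its derivation, each time passing the match
through the trailing `≼`, which is transitive. Simulations preserve termination, so
`t ≡ t'` gives `C[t] ⇓ ⟺ C[t'] ⇓`.
-/

namespace RefLang

variable {Loc : Type}

section Lifting

variable {R R' : Rd Loc → Rd Loc → Prop}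

theorem VRel.refl (hR : ∀ p, R p p) : ∀ v : Val Loc, VRel R v v
  | .inl _ => rfl
  | .inr (.inl _) => rfl
  | .inr (.inr p) => hR p

theorem VRel.mono (h : ∀ p q, R p q → R' p q) :
    ∀ {v w : Val Loc}, VRel R v w → VRel R' v w
  | .inl _, .inl _, hv => hv
  | .inr (.inl _), .inr (.inl _), hv => hv
  | .inr (.inr _), .inr (.inr _), hv => h _ _ hv

theorem VRel.comp : ∀ {v w u : Val Loc}, VRel R v w → VRel R' w u →
    VRel (Relation.Comp R R') v u
  | .inl _, .inl _, .inl _, h, h' => h.trans h'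
  | .inr (.inl _), .inr (.inl _), .inr (.inl _), h, h' => h.trans h'
  | .inr (.inr _), .inr (.inr _), .inr (.inr _), h, h' => ⟨_, h, h'⟩

theorem VRel.of_rel {p q : Rd Loc} (h : R p q) : VRel R (.inr (.inr p)) (.inr (.inr q)) := h

theorem VRel.eq_or_rd : ∀ {v w : Val Loc}, VRel R v w →
    v = w ∨ ∃ p q, v = .inr (.inr p) ∧ w = .inr (.inr q) ∧ R p q
  | .inl _, .inl _, h => .inl (congrArg _ h)
  | .inr (.inl _), .inr (.inl _), h => .inl (by rw [h])
  | .inr (.inr _), .inr (.inr _), h => .inr ⟨_, _, rfl, rfl, h⟩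

theorem sRel_iff {s₁ s₂ : St Loc} :
    SRel R s₁ s₂ ↔ ∀ l, Option.Rel (VRel R) (s₁ l) (s₂ l) := by
  refine forall_congr' fun l => ?_
  cases s₁ l <;> cases s₂ l <;> simp

theorem SRel.refl (hR : ∀ p, R p p) (s : St Loc) : SRel R s s :=
  sRel_iff.2 fun l => by cases s l <;> simp [VRel.refl hR]

theorem SRel.mono (h : ∀ p q, R p q → R' p q) {s₁ s₂ : St Loc} (hs : SRel R s₁ s₂) :
    SRel R' s₁ s₂ := by
  intro l
  rcases hs l with hnone | ⟨v₁, v₂, h₁, h₂, hv⟩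
  exacts [.inl hnone, .inr ⟨v₁, v₂, h₁, h₂, hv.mono h⟩]

theorem SRel.comp {s₁ s₂ s₃ : St Loc} (h : SRel R s₁ s₂) (h' : SRel R' s₂ s₃) :
    SRel (Relation.Comp R R') s₁ s₃ := by
  intro l
  rcases h l with ⟨h₁, h₂⟩ | ⟨v₁, v₂, h₁, h₂, hv⟩ <;>
    rcases h' l with ⟨h₂', h₃⟩ | ⟨w₂, w₃, h₂', h₃, hw⟩
  · exact .inl ⟨h₁, h₃⟩
  · simp_all
  · simp_all
  · obtain rfl : v₂ = w₂ := by simpa [h₂] using h₂'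
    exact .inr ⟨v₁, w₃, h₁, h₃, hv.comp hw⟩

theorem SRel.update {s₁ s₂ : St Loc} {v₁ v₂ : Val Loc} (hs : SRel R s₁ s₂)
    (hv : VRel R v₁ v₂) (l : Loc) : SRel R (updS s₁ l v₁) (updS s₂ l v₂) := by
  intro l'
  by_cases h : l' = l
  · simpa [updS, h] using hv
  · simpa [updS, h] using hs l'

theorem optionRel_vRel {o₁ o₂ : Option (Val Loc)} (h : Option.Rel (VRel R) o₁ o₂) :
    o₁ = o₂ ∨
      ∃ p q, o₁ = some (.inr (.inr p)) ∧ o₂ = some (.inr (.inr q)) ∧ R p q := by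
  rcases h with ⟨hv⟩ | _
  · rcases hv.eq_or_rd with rfl | ⟨p, q, rfl, rfl, hpq⟩
    exacts [.inl rfl, .inr ⟨p, q, rfl, rfl, hpq⟩]
  · exact .inl rfl

theorem SRel.eq_none {s₁ s₂ : St Loc} (hs : SRel R s₁ s₂) {l : Loc} (h : s₁ l = none) :
    s₂ l = none := by
  rcases hs l with ⟨-, h'⟩ | ⟨_, _, h₁, -⟩
  exacts [h', by simp_all]

theorem eev_rel {s₁ s₂ : St Loc} (hs : SRel R s₁ s₂) (e : RExp Loc) :
    Option.Rel (VRel R) (eev s₁ e) (eev s₂ e) := by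
  induction e with
  | loc _ | int _ => exact .some rfl
  | deref e ih =>
    simp only [eev]
    rcases optionRel_vRel ih with h | ⟨_, _, h, h', -⟩
    · rw [← h]
      rcases eev s₁ e with _ | l | _ | _
      exacts [.none, sRel_iff.1 hs l, .none, .none]
    · rw [h, h']; exact .none
  | add e₁ e₂ ih₁ ih₂ | sub e₁ e₂ ih₁ ih₂ =>
    simp only [eev]
    rcases optionRel_vRel ih₁ with h₁ | ⟨_, _, h₁, h₁', -⟩ <;>
      rcases optionRel_vRel ih₂ with h₂ | ⟨_, _, h₂, h₂', -⟩
    · rw [← h₁, ← h₂]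
      split <;> first | exact .none | exact .some rfl
    · rw [← h₁, h₂, h₂']
      rcases eev s₁ e₁ with _ | _ | _ | _ <;> exact .none
    all_goals rw [h₁, h₁']; exact .none

theorem eev_eq_of_sRel {s₁ s₂ : St Loc} (hs : SRel R s₁ s₂)
    {e : RExp Loc} {v : Val Loc} (h : eev s₁ e = some v) (hv : ∀ p, v ≠ .inr (.inr p)) :
    eev s₂ e = some v := by
  rcases optionRel_vRel (eev_rel hs e) with h' | ⟨p, _, h', -, -⟩
  · rwa [← h']
  · rw [h, Option.some_inj] at h'
    exact absurd h' (hv p)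

end Lifting

theorem rstep_whileE_eq_some {e : RExp Loc} {p : Rd Loc} {s : St Loc} {c : Wr Loc} :
    rstep (.whileE e p) s = some c ↔ ∃ n, eev s e = some (.inr (.inl n)) ∧
      c = if n = 0 then .retS s else .outW s (.runW (.seq p (.whileE e p)) s) := by
  simp only [rstep]
  rcases eev s e with _ | _ | n | _
  case some.inr.inl => by_cases n = 0 <;> simp [eq_comm, *]
  all_goals simp

theorem rstep_ite_eq_some {e : RExp Loc} {p q : Rd Loc} {s : St Loc} {c : Wr Loc} :
    rstep (.ite e p q) s = some c ↔ ∃ n, eev s e = some (.inr (.inl n)) ∧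
      c = .outW s (.runW (if n = 0 then q else p) s) := by
  simp only [rstep]
  rcases eev s e with _ | _ | n | _
  case some.inr.inl => by_cases n = 0 <;> simp [eq_comm, *]
  all_goals simp

theorem Wk.map (f : Wr Loc → Wr Loc) (hf : ∀ {c d}, Step1 c d → Step1 (f c) (f d))
    {c d : Wr Loc} (h : Wk c d) : Wk (f c) (f d) :=
  Relation.ReflTransGen.lift f (fun _ _ => hf) _ _ h

theorem Wk.assignW (e : RExp Loc) {c d : Wr Loc} (h : Wk c d) :
    Wk (.assignW e c) (.assignW e d) :=
  h.map _ fun h => h.imp WTr.asgTau fun ⟨s, h⟩ => ⟨s, WTr.asgOut h⟩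

theorem Wk.seqW {c d : Wr Loc} (h : Wk c d) (q : Rd Loc) : Wk (.seqW c q) (.seqW d q) :=
  h.map _ fun h => h.imp WTr.seqTau fun ⟨s, h⟩ => ⟨s, WTr.seqOut h⟩

theorem Wk.refW {c d : Wr Loc} (h : Wk c d) : Wk (.refW c) (.refW d) :=
  h.map _ fun h => h.imp WTr.refTau fun ⟨s, h⟩ => ⟨s, WTr.refOut h⟩

def WeakMatch (Rr : Rd Loc → Rd Loc → Prop) (Rw : Wr Loc → Wr Loc → Prop) (d : Wr Loc) :
    WLab Loc → Prop
  | .tau c' | .out _ c' => ∃ d', Wk d d' ∧ Rw c' d'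
  | .dn s => ∃ s', BigS d s' ∧ SRel Rr s s'
  | .dnV v s => ∃ v' s', BigV d v' s' ∧ VRel Rr v v' ∧ SRel Rr s s'

section Simulation

variable {Rr Sr : Rd Loc → Rd Loc → Prop} {Rw Sw : Wr Loc → Wr Loc → Prop}

theorem isTermSim_iff : IsTermSim Rr Rw ↔
    (∀ p q s c, Rr p q → rstep p s = some c → ∃ d, rstep q s = some d ∧ Rw c d) ∧
      ∀ c d ℓ, Rw c d → WTr c ℓ → WeakMatch Rr Rw d ℓ := by
  refine and_congr_right fun _ => ⟨fun ⟨hstep, hdn, hdnV⟩ c d ℓ hcd h => ?_, fun h => ?_⟩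
  · cases ℓ
    exacts [hstep _ _ _ hcd (.inl h), hstep _ _ _ hcd (.inr ⟨_, h⟩), hdn _ _ _ hcd h,
      hdnV _ _ _ _ hcd h]
  · refine ⟨?_, fun c d _ hcd => h c d _ hcd, fun c d _ _ hcd => h c d _ hcd⟩
    rintro c d c' hcd (h' | ⟨s, h'⟩)
    exacts [h _ _ _ hcd h', h _ _ _ hcd h']

theorem IsTermSim.weakMatch (hS : IsTermSim Rr Rw) {c d : Wr Loc} {ℓ : WLab Loc}
    (hcd : Rw c d) (h : WTr c ℓ) : WeakMatch Rr Rw d ℓ :=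
  (isTermSim_iff.1 hS).2 c d ℓ hcd h

theorem WeakMatch.of_wk {d d' : Wr Loc} {ℓ : WLab Loc} (hw : Wk d d')
    (h : WeakMatch Rr Rw d' ℓ) : WeakMatch Rr Rw d ℓ := by
  cases ℓ with
  | tau | out =>
    obtain ⟨e, he, hr⟩ := h
    exact ⟨e, Relation.ReflTransGen.trans hw he, hr⟩
  | dn =>
    obtain ⟨s', ⟨e, he, hdn⟩, hs⟩ := h
    exact ⟨s', ⟨e, Relation.ReflTransGen.trans hw he, hdn⟩, hs⟩
  | dnV =>
    obtain ⟨v', s', ⟨e, he, hdn⟩, hv, hs⟩ := h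
    exact ⟨v', s', ⟨e, Relation.ReflTransGen.trans hw he, hdn⟩, hv, hs⟩

theorem WeakMatch.mono (hr : ∀ p q, Rr p q → Sr p q) (hw : ∀ c d, Rw c d → Sw c d)
    {d : Wr Loc} {ℓ : WLab Loc} (h : WeakMatch Rr Rw d ℓ) : WeakMatch Sr Sw d ℓ := by
  cases ℓ with
  | tau | out =>
    obtain ⟨d', hd, h⟩ := h
    exact ⟨d', hd, hw _ _ h⟩
  | dn =>
    obtain ⟨s', hd, hs⟩ := h
    exact ⟨s', hd, hs.mono hr⟩
  | dnV =>
    obtain ⟨v', s', hd, hv, hs⟩ := h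
    exact ⟨v', s', hd, hv.mono hr, hs.mono hr⟩

theorem IsTermSim.wk (hS : IsTermSim Rr Rw) {c c' d : Wr Loc} (hcd : Rw c d)
    (h : Wk c c') : ∃ d', Wk d d' ∧ Rw c' d' := by
  induction h with
  | refl => exact ⟨d, .refl, hcd⟩
  | tail _ hstep ih =>
    obtain ⟨e, hde, he⟩ := ih
    obtain ⟨e', hee', he'⟩ : ∃ e', Wk e e' ∧ Rw _ e' := by
      rcases hstep with h | ⟨s, h⟩ <;> exact hS.weakMatch he h
    exact ⟨e', Relation.ReflTransGen.trans hde hee', he'⟩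

theorem IsTermSim.weakMatch_of_wk (hS : IsTermSim Rr Rw) {c c' d : Wr Loc}
    {ℓ : WLab Loc} (hcd : Rw c d) (hw : Wk c c') (h : WTr c' ℓ) : WeakMatch Rr Rw d ℓ := by
  obtain ⟨d', hdd', hcd'⟩ := hS.wk hcd hw
  exact (hS.weakMatch hcd' h).of_wk hdd'

theorem WeakMatch.comp (hS : IsTermSim Sr Sw) {d e : Wr Loc} {ℓ : WLab Loc}
    (h : WeakMatch Rr Rw d ℓ) (hde : Sw d e) :
    WeakMatch (Relation.Comp Rr Sr) (Relation.Comp Rw Sw) e ℓ := by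
  cases ℓ with
  | tau | out =>
    obtain ⟨d', hd, hr⟩ := h
    obtain ⟨e', he, hs⟩ := hS.wk hde hd
    exact ⟨e', he, d', hr, hs⟩
  | dn =>
    obtain ⟨s', ⟨d', hd, hdn⟩, hr⟩ := h
    obtain ⟨s'', he, hs⟩ := hS.weakMatch_of_wk hde hd hdn
    exact ⟨s'', he, hr.comp hs⟩
  | dnV =>
    obtain ⟨v', s', ⟨d', hd, hdn⟩, hrv, hr⟩ := h
    obtain ⟨v'', s'', he, hsv, hs⟩ := hS.weakMatch_of_wk hde hd hdn
    exact ⟨v'', s'', he, hrv.comp hsv, hr.comp hs⟩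

theorem IsTermSim.comp (hR : IsTermSim Rr Rw) (hS : IsTermSim Sr Sw) :
    IsTermSim (Relation.Comp Rr Sr) (Relation.Comp Rw Sw) := by
  refine isTermSim_iff.2 ⟨?_, ?_⟩
  · rintro p r s c ⟨q, hpq, hqr⟩ hp
    obtain ⟨d, hq, hcd⟩ := hR.1 p q s c hpq hp
    obtain ⟨e, hr, hde⟩ := hS.1 q r s d hqr hq
    exact ⟨e, hr, d, hcd, hde⟩
  · rintro c e ℓ ⟨d, hcd, hde⟩ h
    exact (hR.weakMatch hcd h).comp hS hde

theorem IsTermSim.convW (hS : IsTermSim Rr Rw) {c d : Wr Loc} (hcd : Rw c d)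
    (hc : ConvW c) : ConvW d := by
  rcases hc with ⟨v, s, c', hw, h⟩ | ⟨s, c', hw, h⟩
  · obtain ⟨v', s', hd, -⟩ := hS.weakMatch_of_wk hcd hw h
    exact .inl ⟨v', s', hd⟩
  · obtain ⟨s', hd, -⟩ := hS.weakMatch_of_wk hcd hw h
    exact .inr ⟨s', hd⟩

theorem IsTermSim.convR (hS : IsTermSim Rr Rw) {p q : Rd Loc} {s : St Loc} (hpq : Rr p q)
    (hp : ConvR p s) : ConvR q s := by
  obtain ⟨c, hc, hconv⟩ := hp
  obtain ⟨d, hd, hcd⟩ := hS.1 p q s c hpq hc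
  exact ⟨d, hd, hS.convW hcd hconv⟩

theorem isTermSim_eq : IsTermSim (@Eq (Rd Loc)) (@Eq (Wr Loc)) := by
  refine isTermSim_iff.2 ⟨fun p q s c hpq hp => ⟨c, hpq ▸ hp, rfl⟩, ?_⟩
  rintro c _ ℓ rfl h
  cases ℓ with
  | tau => exact ⟨_, .single (.inl h), rfl⟩
  | out => exact ⟨_, .single (.inr ⟨_, h⟩), rfl⟩
  | dn s => exact ⟨s, ⟨c, .refl, h⟩, .refl (fun _ => rfl) s⟩
  | dnV v s => exact ⟨v, s, ⟨c, .refl, h⟩, .refl (fun _ => rfl) v, .refl (fun _ => rfl) s⟩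

end Simulation

theorem isTermSim_sim : IsTermSim (SimR (Loc := Loc)) SimW := by
  refine isTermSim_iff.2 ⟨?_, ?_⟩
  · rintro p q s c ⟨Rr, Rw, hS, hpq⟩ hp
    obtain ⟨d, hq, hcd⟩ := hS.1 p q s c hpq hp
    exact ⟨d, hq, Rr, Rw, hS, hcd⟩
  · rintro c d ℓ ⟨Rr, Rw, hS, hcd⟩ h
    exact (hS.weakMatch hcd h).mono (fun _ _ h => ⟨Rr, Rw, hS, h⟩)
      fun _ _ h => ⟨Rr, Rw, hS, h⟩

theorem simR_refl (p : Rd Loc) : SimR p p := ⟨_, _, isTermSim_eq, rfl⟩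

theorem simW_refl (c : Wr Loc) : SimW c c := ⟨_, _, isTermSim_eq, rfl⟩

theorem simR_trans {p q r : Rd Loc} (h : SimR p q) (h' : SimR q r) : SimR p r :=
  ⟨_, _, isTermSim_sim.comp isTermSim_sim, q, h, h'⟩

theorem simW_trans {c d e : Wr Loc} (h : SimW c d) (h' : SimW d e) : SimW c e :=
  ⟨_, _, isTermSim_sim.comp isTermSim_sim, d, h, h'⟩

/-- Howe's relation `≼°` on readers; `HoweW` is `≼°` on writers. -/
inductive HoweR : Rd Loc → Rd Loc → Prop
  | skip {q} : SimR .skip q → HoweR .skip q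
  | whileE {e p p' q} : HoweR p p' → SimR (.whileE e p') q → HoweR (.whileE e p) q
  | assign {e p p' q} : HoweR p p' → SimR (.assign e p') q → HoweR (.assign e p) q
  | ite {e p₁ p₁' p₂ p₂' q} : HoweR p₁ p₁' → HoweR p₂ p₂' →
      SimR (.ite e p₁' p₂') q → HoweR (.ite e p₁ p₂) q
  | seq {p₁ p₁' p₂ p₂' q} : HoweR p₁ p₁' → HoweR p₂ p₂' →
      SimR (.seq p₁' p₂') q → HoweR (.seq p₁ p₂) q
  | ref {p p' q} : HoweR p p' → SimR (.ref p') q → HoweR (.ref p) q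
  | expr {e q} : SimR (.expr e) q → HoweR (.expr e) q
  | proc {p p' q} : HoweR p p' → SimR (.proc p') q → HoweR (.proc p) q

inductive HoweW : Wr Loc → Wr Loc → Prop
  | assignW {e c c' d} : HoweW c c' → SimW (.assignW e c') d → HoweW (.assignW e c) d
  | seqW {c c' q q' d} : HoweW c c' → HoweR q q' → SimW (.seqW c' q') d →
      HoweW (.seqW c q) d
  | refW {c c' d} : HoweW c c' → SimW (.refW c') d → HoweW (.refW c) d
  | outW {s s' c c' d} : SRel HoweR s s' → HoweW c c' → SimW (.outW s' c') d →
      HoweW (.outW s c) d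
  | runW {p p' s s' d} : HoweR p p' → SRel HoweR s s' → SimW (.runW p' s') d →
      HoweW (.runW p s) d
  | retV {v v' s s' d} : VRel HoweR v v' → SRel HoweR s s' → SimW (.retV v' s') d →
      HoweW (.retV v s) d
  | retS {s s' d} : SRel HoweR s s' → SimW (.retS s') d → HoweW (.retS s) d

theorem HoweR.refl : ∀ p : Rd Loc, HoweR p p
  | .skip => .skip (simR_refl _)
  | .whileE _ p => .whileE (HoweR.refl p) (simR_refl _)
  | .assign _ p => .assign (HoweR.refl p) (simR_refl _)
  | .ite _ p₁ p₂ => .ite (HoweR.refl p₁) (HoweR.refl p₂) (simR_refl _)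
  | .seq p₁ p₂ => .seq (HoweR.refl p₁) (HoweR.refl p₂) (simR_refl _)
  | .ref p => .ref (HoweR.refl p) (simR_refl _)
  | .expr _ => .expr (simR_refl _)
  | .proc p => .proc (HoweR.refl p) (simR_refl _)

theorem HoweW.refl : ∀ c : Wr Loc, HoweW c c
  | .assignW _ c => .assignW (HoweW.refl c) (simW_refl _)
  | .seqW c q => .seqW (HoweW.refl c) (HoweR.refl q) (simW_refl _)
  | .refW c => .refW (HoweW.refl c) (simW_refl _)
  | .outW s c => .outW (.refl HoweR.refl s) (HoweW.refl c) (simW_refl _)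
  | .runW p s => .runW (HoweR.refl p) (.refl HoweR.refl s) (simW_refl _)
  | .retV v s => .retV (.refl HoweR.refl v) (.refl HoweR.refl s) (simW_refl _)
  | .retS s => .retS (.refl HoweR.refl s) (simW_refl _)

theorem HoweR.trans_simR {p q r : Rd Loc} (h : HoweR p q) (h' : SimR q r) : HoweR p r := by
  cases h <;> constructor <;> first | assumption | exact simR_trans (by assumption) h'

theorem HoweW.trans_simW {c d e : Wr Loc} (h : HoweW c d) (h' : SimW d e) : HoweW c e := by
  cases h <;> constructor <;> first | assumption | exact simW_trans (by assumption) h'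

theorem HoweR.of_simR {p q : Rd Loc} (h : SimR p q) : HoweR p q := (HoweR.refl p).trans_simR h

theorem HoweW.of_simW {c d : Wr Loc} (h : SimW c d) : HoweW c d := (HoweW.refl c).trans_simW h

theorem HoweW.exists_rstep_of_simR {p q : Rd Loc} {s : St Loc} {c m : Wr Loc}
    (hcm : HoweW c m) (hm : rstep p s = some m) (hpq : SimR p q) :
    ∃ d, rstep q s = some d ∧ HoweW c d := by
  obtain ⟨d, hd, hmd⟩ := isTermSim_sim.1 p q s m hpq hm
  exact ⟨d, hd, hcm.trans_simW hmd⟩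

theorem exists_rstep_expr_of_sRel {e : RExp Loc} {s₁ s₂ : St Loc} {c : Wr Loc}
    (hs : SRel HoweR s₁ s₂) (h : rstep (.expr e) s₁ = some c) :
    ∃ d, rstep (.expr e) s₂ = some d ∧ HoweW c d := by
  simp only [rstep] at h ⊢
  rcases optionRel_vRel (eev_rel hs e) with h' | ⟨p, q, h₁, h₂, hpq⟩
  · rw [← h']
    generalize eev s₁ e = o at h ⊢
    rcases o with _ | l | n | p <;> cases h
    exacts [⟨_, rfl, .retV (.refl HoweR.refl _) hs (simW_refl _)⟩,
      ⟨_, rfl, .retV (.refl HoweR.refl _) hs (simW_refl _)⟩,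
      ⟨_, rfl, .outW hs (.runW (.refl p) hs (simW_refl _)) (simW_refl _)⟩]
  · rw [h₁] at h
    cases h
    rw [h₂]
    exact ⟨_, rfl, .outW hs (.runW hpq hs (simW_refl _)) (simW_refl _)⟩

theorem HoweR.exists_rstep {p q : Rd Loc} {s₁ s₂ : St Loc} {c : Wr Loc} (hpq : HoweR p q)
    (hs : SRel HoweR s₁ s₂) (hp : rstep p s₁ = some c) :
    ∃ d, rstep q s₂ = some d ∧ HoweW c d := by
  cases hpq with
  | skip hq =>
    cases hp
    exact (HoweW.retS hs (simW_refl _)).exists_rstep_of_simR rfl hq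
  | whileE hp' hq =>
    obtain ⟨n, hn, rfl⟩ := rstep_whileE_eq_some.1 hp
    refine HoweW.exists_rstep_of_simR ?_
      (rstep_whileE_eq_some.2 ⟨n, eev_eq_of_sRel hs hn (by simp), rfl⟩) hq
    split_ifs
    exacts [.retS hs (simW_refl _), .outW hs (.runW (.seq hp' (.whileE hp' (simR_refl _))
      (simR_refl _)) hs (simW_refl _)) (simW_refl _)]
  | assign hp' hq =>
    cases hp
    exact (HoweW.assignW (.runW hp' hs (simW_refl _)) (simW_refl _)).exists_rstep_of_simR rfl hq
  | ite hp₁ hp₂ hq =>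
    obtain ⟨n, hn, rfl⟩ := rstep_ite_eq_some.1 hp
    refine HoweW.exists_rstep_of_simR ?_
      (rstep_ite_eq_some.2 ⟨n, eev_eq_of_sRel hs hn (by simp), rfl⟩) hq
    exact .outW hs (.runW (by split_ifs <;> assumption) hs (simW_refl _)) (simW_refl _)
  | seq hp₁ hp₂ hq =>
    cases hp
    exact (HoweW.seqW (.runW hp₁ hs (simW_refl _)) hp₂ (simW_refl _)).exists_rstep_of_simR
      rfl hq
  | ref hp' hq =>
    cases hp
    exact (HoweW.refW (.runW hp' hs (simW_refl _)) (simW_refl _)).exists_rstep_of_simR rfl hq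
  | expr hq =>
    obtain ⟨m, hm, hcm⟩ := exists_rstep_expr_of_sRel hs hp
    exact hcm.exists_rstep_of_simR hm hq
  | proc hp' hq =>
    cases hp
    exact (HoweW.retV (.of_rel hp') hs (simW_refl _)).exists_rstep_of_simR rfl hq

theorem WeakMatch.trans_simW {m d : Wr Loc} {ℓ : WLab Loc}
    (h : WeakMatch HoweR HoweW m ℓ) (hmd : SimW m d) : WeakMatch HoweR HoweW d ℓ :=
  (h.comp isTermSim_sim hmd).mono (fun _ _ ⟨_, h, h'⟩ => h.trans_simR h')
    fun _ _ ⟨_, h, h'⟩ => h.trans_simW h'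

theorem HoweW.weakMatch {c d : Wr Loc} {ℓ : WLab Loc} (h : WTr c ℓ) (hcd : HoweW c d) :
    WeakMatch HoweR HoweW d ℓ := by
  induction h generalizing d with
  | runW hp =>
    cases hcd with | runW hpq hs hd => ?_
    obtain ⟨m, hm, hcm⟩ := hpq.exists_rstep hs hp
    exact .trans_simW ⟨m, .single (.inl (.runW hm)), hcm⟩ hd
  | retV =>
    cases hcd with | retV hv hs hd => ?_
    exact .trans_simW ⟨_, _, ⟨_, .refl, .retV⟩, hv, hs⟩ hd
  | retS =>
    cases hcd with | retS hs hd => ?_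
    exact .trans_simW ⟨_, ⟨_, .refl, .retS⟩, hs⟩ hd
  | outW =>
    cases hcd with | outW _ hc hd => ?_
    exact .trans_simW ⟨_, .single (.inr ⟨_, .outW⟩), hc⟩ hd
  | refTau _ ih | refOut _ ih =>
    cases hcd with | refW hc hd => ?_
    obtain ⟨m, hm, hcm⟩ := ih hc
    exact .trans_simW ⟨_, hm.refW, .refW hcm (simW_refl _)⟩ hd
  | refDn _ hl ih =>
    cases hcd with | refW hc hd => ?_
    obtain ⟨v', s', ⟨m, hm, hdn⟩, hv, hs⟩ := ih hc
    exact .trans_simW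
      ⟨_, _, ⟨_, hm.refW, .refDn hdn (hs.eq_none hl)⟩, rfl, hs.update hv _⟩ hd
  | seqTau _ ih | seqOut _ ih =>
    cases hcd with | seqW hc hq hd => ?_
    obtain ⟨m, hm, hcm⟩ := ih hc
    exact .trans_simW ⟨_, hm.seqW _, .seqW hcm hq (simW_refl _)⟩ hd
  | seqDnV _ ih =>
    cases hcd with | seqW hc hq hd => ?_
    obtain ⟨v', s', ⟨m, hm, hdn⟩, -, hs⟩ := ih hc
    exact .trans_simW
      ⟨_, (hm.seqW _).tail (.inr ⟨_, .seqDnV hdn⟩), .runW hq hs (simW_refl _)⟩ hd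
  | seqDn _ ih =>
    cases hcd with | seqW hc hq hd => ?_
    obtain ⟨s', ⟨m, hm, hdn⟩, hs⟩ := ih hc
    exact .trans_simW
      ⟨_, (hm.seqW _).tail (.inl (.seqDn hdn)), .runW hq hs (simW_refl _)⟩ hd
  | asgTau _ ih | asgOut _ ih =>
    cases hcd with | assignW hc hd => ?_
    obtain ⟨m, hm, hcm⟩ := ih hc
    exact .trans_simW ⟨_, hm.assignW _, .assignW hcm (simW_refl _)⟩ hd
  | asgDn hl _ ih =>
    cases hcd with | assignW hc hd => ?_
    obtain ⟨v', s', ⟨m, hm, hdn⟩, hv, hs⟩ := ih hc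
    exact .trans_simW
      ⟨_, ⟨_, hm.assignW _, .asgDn (eev_eq_of_sRel hs hl (by simp)) hdn⟩, hs.update hv _⟩ hd

theorem isTermSim_howe : IsTermSim (HoweR (Loc := Loc)) HoweW :=
  isTermSim_iff.2 ⟨fun _ _ s _ hpq => hpq.exists_rstep (.refl HoweR.refl s),
    fun _ _ _ hcd h => HoweW.weakMatch h hcd⟩

def SimTm : {σ : Sort2} → Tm2 Loc σ → Tm2 Loc σ → Prop
  | .r => SimR
  | .w => SimW

mutual
theorem howeR_plugR : ∀ {σ : Sort2} (C : CtxR Loc σ) {t t' : Tm2 Loc σ},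
    SimTm t t' → HoweR (plugR C t) (plugR C t')
  | _, .hole, _, _, ht => .of_simR ht
  | _, .whileE _ C, _, _, ht => .whileE (howeR_plugR C ht) (simR_refl _)
  | _, .assign _ C, _, _, ht => .assign (howeR_plugR C ht) (simR_refl _)
  | _, .iteL _ C q, _, _, ht => .ite (howeR_plugR C ht) (.refl q) (simR_refl _)
  | _, .iteR _ p C, _, _, ht => .ite (.refl p) (howeR_plugR C ht) (simR_refl _)
  | _, .seqL C q, _, _, ht => .seq (howeR_plugR C ht) (.refl q) (simR_refl _)
  | _, .seqR p C, _, _, ht => .seq (.refl p) (howeR_plugR C ht) (simR_refl _)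
  | _, .ref C, _, _, ht => .ref (howeR_plugR C ht) (simR_refl _)
  | _, .proc C, _, _, ht => .proc (howeR_plugR C ht) (simR_refl _)

theorem howeW_plugW : ∀ {σ : Sort2} (C : CtxW Loc σ) {t t' : Tm2 Loc σ},
    SimTm t t' → HoweW (plugW C t) (plugW C t')
  | _, .hole, _, _, ht => .of_simW ht
  | _, .assignW _ C, _, _, ht => .assignW (howeW_plugW C ht) (simW_refl _)
  | _, .seqWL C q, _, _, ht => .seqW (howeW_plugW C ht) (.refl q) (simW_refl _)
  | _, .seqWR c C, _, _, ht => .seqW (.refl c) (howeR_plugR C ht) (simW_refl _)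
  | _, .refW C, _, _, ht => .refW (howeW_plugW C ht) (simW_refl _)
  | _, .outWC s C, _, _, ht => .outW (.refl HoweR.refl s) (howeW_plugW C ht) (simW_refl _)
  | _, .outWS Cs c, _, _, ht => .outW (sRel_howeR_plugS Cs ht) (.refl c) (simW_refl _)
  | _, .runWP C s, _, _, ht => .runW (howeR_plugR C ht) (.refl HoweR.refl s) (simW_refl _)
  | _, .runWS p Cs, _, _, ht => .runW (.refl p) (sRel_howeR_plugS Cs ht) (simW_refl _)
  | _, .retVV C s, _, _, ht =>
    .retV (.of_rel (howeR_plugR C ht)) (.refl HoweR.refl s) (simW_refl _)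
  | _, .retVS v Cs, _, _, ht =>
    .retV (.refl HoweR.refl v) (sRel_howeR_plugS Cs ht) (simW_refl _)
  | _, .retSS Cs, _, _, ht => .retS (sRel_howeR_plugS Cs ht) (simW_refl _)

theorem sRel_howeR_plugS : ∀ {σ : Sort2} (C : CtxS Loc σ) {t t' : Tm2 Loc σ},
    SimTm t t' → SRel HoweR (plugS C t) (plugS C t')
  | _, .mk s l C, _, _, ht =>
    (SRel.refl HoweR.refl s).update (.of_rel (howeR_plugR C ht)) l
end

theorem ctxEq_of_simTm {σ : Sort2} {t t' : Tm2 Loc σ} (h : SimTm t t') (h' : SimTm t' t) :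
    (∀ (C : CtxR Loc σ) (s : St Loc), ConvR (plugR C t) s ↔ ConvR (plugR C t') s) ∧
      ∀ C : CtxW Loc σ, ConvW (plugW C t) ↔ ConvW (plugW C t') :=
  ⟨fun C _ => ⟨isTermSim_howe.convR (howeR_plugR C h),
      isTermSim_howe.convR (howeR_plugR C h')⟩,
    fun C => ⟨isTermSim_howe.convW (howeW_plugW C h), isTermSim_howe.convW (howeW_plugW C h')⟩⟩

/-- two-way termination similarity is sound for contextual
equivalence in Ref²: if `p ≡_r q` then `p ≡ctx_r q`, and if `c ≡_w d` then
`c ≡ctx_w d`, where `≡ = ≼ ∩ ≽` is the symmetrization of termination similarity. -/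
theorem termination_similarity_sound_for_contextual_equivalence :
    (∀ p q : Rd Loc, EqvR p q → CtxEqR p q) ∧
    (∀ c d : Wr Loc, EqvW c d → CtxEqW c d) :=
  ⟨fun _ _ h => ctxEq_of_simTm h.1 h.2, fun _ _ h => ctxEq_of_simTm h.1 h.2⟩

end RefLang
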